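/- Let h ∈ (0,1) and λ ∈ (0,1). Then the regularized potential F_λ = F_{1,λ} + F̄₂ is twice continuously differentiable on all of ℝ. -/

import Mathlib

/-- Convex singular part `F_{1,λ}` of the regularized Lennard--Jones potential. -/
noncomputable def F1reg (h l r : ℝ) : ℝ :=
  if r < 0 then -r^3/l + h/2 * r^2 + h*r
  else if r < 1 - l then -h * Real.log (1 - r)
  else -h * Real.log l + 3*h/2 - 2*h/l * (1 - r) + h/(2*l^2) * (1 - r)^2

/-- Non-convex regular part `F̄₂` of the regularized Lennard--Jones potential. -/
noncomputable def F2reg (h r : ℝ) : ℝ :=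
  if r < 1 then -r^3/3 - h*(r^2/2 + r)
  else -1/3 - 3*h/2 - (1 + 2*h)*(r - 1) - (2 + h)/2 * (r - 1)^2

/-- The regularized potential `F_λ = F_{1,λ} + F̄₂`. -/
noncomputable def Freg (h l r : ℝ) : ℝ := F1reg h l r + F2reg h r

/-!
Each of `F_{1,λ}` and `F̄₂` is glued from pieces that are smooth on open sets covering their
ranges, and at every junction (`0` and `1 - λ` for `F_{1,λ}`, `1` for `F̄₂`) the two adjacent
pieces have the same value, slope and curvature; for instance
`-h log (1 - r) = h r + h r² / 2 + O(r³)` matches the cubic at `0`. Two `C^n` pieces with the same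
`n`-jet at the junction glue to a `C^n` function, by induction on `n`: the derivative of the glued
function is the glued function of the derivatives.
-/

open Set Filter Topology

section Gluing

theorem continuous_ite_lt {α β : Type*} [TopologicalSpace α] [LinearOrder α]
    [OrderClosedTopology α] [TopologicalSpace β] {a : α} {f g : α → β} {U V : Set α}
    (haU : Iic a ⊆ U) (haV : Ici a ⊆ V) (hf : ContinuousOn f U) (hg : ContinuousOn g V)
    (hfg : f a = g a) :
    Continuous fun y => if y < a then f y else g y := by
  refine (continuous_if_le continuous_const continuous_id (hg.mono haV) (hf.mono haU)
    fun x (hx : a = x) => hx ▸ hfg.symm).congr fun y => ?_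
  by_cases hy : y < a
  · simp [hy, not_le.2 hy]
  · simp [hy, not_lt.1 hy]

variable {F : Type*} [NormedAddCommGroup F] [NormedSpace ℝ F] {a : ℝ} {f g : ℝ → F}

theorem hasDerivAt_ite_lt {x : ℝ} {d : F} (hfg : f a = g a) (hf : x ≤ a → HasDerivAt f d x)
    (hg : a ≤ x → HasDerivAt g d x) :
    HasDerivAt (fun y => if y < a then f y else g y) d x := by
  rcases lt_trichotomy x a with hx | rfl | hx
  · refine (hf hx.le).congr_of_eventuallyEq ?_
    filter_upwards [Iio_mem_nhds hx] with y hy using if_pos hy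
  · have hleft : HasDerivWithinAt (fun y => if y < x then f y else g y) d (Iic x) x :=
      (hf le_rfl).hasDerivWithinAt.congr (fun y hy => by
        rcases (mem_Iic.1 hy).lt_or_eq with hy | rfl
        · exact if_pos hy
        · simp [hfg]) (by simp [hfg])
    have hright : HasDerivWithinAt (fun y => if y < x then f y else g y) d (Ici x) x :=
      (hg le_rfl).hasDerivWithinAt.congr (fun y hy => if_neg (not_lt.2 hy)) (by simp)
    simpa [Iic_union_Ici] using hleft.union hright
  · refine (hg hx.le).congr_of_eventuallyEq ?_
    filter_upwards [Ioi_mem_nhds hx] with y hy using if_neg (not_lt.2 hy.le)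

theorem contDiff_ite_lt {n : ℕ} {U V : Set ℝ} (hU : IsOpen U) (hV : IsOpen V)
    (haU : Iic a ⊆ U) (haV : Ici a ⊆ V) (hf : ContDiffOn ℝ n f U) (hg : ContDiffOn ℝ n g V)
    (hfg : ∀ k ≤ n, iteratedDeriv k f a = iteratedDeriv k g a) :
    ContDiff ℝ n fun y => if y < a then f y else g y := by
  induction n generalizing f g with
  | zero =>
    exact contDiff_zero.2 <| continuous_ite_lt haU haV hf.continuousOn hg.continuousOn
      (by simpa using hfg 0 le_rfl)
  | succ n ih =>
    push_cast at hf hg ⊢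
    have hfa : f a = g a := by simpa using hfg 0 (Nat.zero_le _)
    have hf'a : deriv f a = deriv g a := by simpa using hfg 1 (by omega)
    have hderiv : ∀ x, HasDerivAt (fun y => if y < a then f y else g y)
        (if x < a then deriv f x else deriv g x) x := by
      intro x
      refine hasDerivAt_ite_lt hfa (fun hx => ?_) (fun hx => ?_)
      · have := ((hf.differentiableOn (by simp)).differentiableAt
          (hU.mem_nhds (haU hx))).hasDerivAt
        rcases hx.lt_or_eq with hx | rfl
        · rwa [if_pos hx]
        · rwa [if_neg (lt_irrefl x), ← hf'a]
      · have := ((hg.differentiableOn (by simp)).differentiableAt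
          (hV.mem_nhds (haV hx))).hasDerivAt
        rwa [if_neg (not_lt.2 hx)]
    refine contDiff_succ_iff_deriv.2 ⟨fun x => (hderiv x).differentiableAt, by simp, ?_⟩
    rw [show deriv _ = _ from funext fun x => (hderiv x).deriv]
    refine ih ((contDiffOn_succ_iff_deriv_of_isOpen hU).1 hf).2.2
      ((contDiffOn_succ_iff_deriv_of_isOpen hV).1 hg).2.2 fun k hk => ?_
    simpa only [← iteratedDeriv_succ'] using hfg (k + 1) (by omega)

theorem iteratedDeriv_le_two_eq (h0 : f a = g a) (h1 : deriv f a = deriv g a)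
    (h2 : deriv (deriv f) a = deriv (deriv g) a) :
    ∀ k ≤ 2, iteratedDeriv k f a = iteratedDeriv k g a := by
  intro k hk
  interval_cases k <;> simpa [iteratedDeriv_succ]

end Gluing

section LogOneSub

variable (c : ℝ) {x : ℝ}

theorem hasDerivAt_neg_mul_log_one_sub (hx : x ≠ 1) :
    HasDerivAt (fun r => -c * Real.log (1 - r)) (c / (1 - x)) x :=
  ((((hasDerivAt_id' x).const_sub 1).log (sub_ne_zero.2 hx.symm)).const_mul (-c)).congr_deriv
    (by ring)

theorem deriv_deriv_neg_mul_log_one_sub (hx : x < 1) :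
    deriv (deriv fun r => -c * Real.log (1 - r)) x = c / (1 - x) ^ 2 := by
  have hderiv : deriv (fun r => -c * Real.log (1 - r)) =ᶠ[𝓝 x] fun r => c / (1 - r) := by
    filter_upwards [Iio_mem_nhds hx] with r hr
    exact (hasDerivAt_neg_mul_log_one_sub c hr.ne).deriv
  have hinv := (((hasDerivAt_id' x).const_sub 1).fun_inv (sub_ne_zero.2 hx.ne')).const_mul c
  rw [hderiv.deriv_eq]
  exact hinv.deriv.trans (by ring)

end LogOneSub

theorem contDiff_F1reg (h : ℝ) {l : ℝ} (hl : l ∈ Ioo 0 1) : ContDiff ℝ 2 (F1reg h l) := by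
  obtain ⟨hl0, hl1⟩ := hl
  have hl_ne : l ≠ 0 := hl0.ne'
  set A : ℝ → ℝ := fun r => -r^3/l + h/2 * r^2 + h*r
  set B : ℝ → ℝ := fun r => -h * Real.log (1 - r)
  set C : ℝ → ℝ := fun r => -h * Real.log l + 3*h/2 - 2*h/l * (1 - r) + h/(2*l^2) * (1 - r)^2
  have hA' : deriv A = fun r => -(3 * r^2)/l + h * r + h := by
    ext r; simp (disch := fun_prop) [A]; ring
  have hC' : deriv C = fun r => 2*h/l - h/l^2 * (1 - r) := by
    ext r; simp (disch := fun_prop) [C]; field_simp; ring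
  have hB : ContDiffOn ℝ 2 B (Iio 1) := by
    fun_prop (disch := exact fun x hx => (sub_pos.2 hx).ne')
  have hBC : ContDiff ℝ 2 fun r => if r < 1 - l then B r else C r := by
    refine contDiff_ite_lt (n := 2) (U := Iio 1) isOpen_Iio isOpen_univ
      (Iic_subset_Iio.2 (by linarith)) (subset_univ _) hB (by fun_prop)
      (iteratedDeriv_le_two_eq ?_ ?_ ?_)
    · simp [B, C]; field_simp; ring
    · rw [(hasDerivAt_neg_mul_log_one_sub h (by linarith)).deriv, hC', sub_sub_cancel]
      field_simp; ring
    · rw [deriv_deriv_neg_mul_log_one_sub h (by linarith), hC']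
      simp (disch := fun_prop)
  have hBC_eq_B : (fun r => if r < 1 - l then B r else C r) =ᶠ[𝓝 0] B := by
    filter_upwards [Iio_mem_nhds (show (0:ℝ) < 1 - l by linarith)] with r hr using if_pos hr
  refine contDiff_ite_lt (n := 2) (a := 0) isOpen_univ isOpen_univ (subset_univ _) (subset_univ _)
    (by fun_prop) hBC.contDiffOn fun k hk => ?_
  rw [(hBC_eq_B.iteratedDeriv k).eq_of_nhds]
  refine iteratedDeriv_le_two_eq ?_ ?_ ?_ k hk
  · simp [B]
  · rw [(hasDerivAt_neg_mul_log_one_sub h (by norm_num)).deriv, hA']; simp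
  · rw [deriv_deriv_neg_mul_log_one_sub h (by norm_num), hA']
    simp (disch := fun_prop)

theorem contDiff_F2reg (h : ℝ) : ContDiff ℝ 2 (F2reg h) := by
  set P : ℝ → ℝ := fun r => -r^3/3 - h*(r^2/2 + r)
  set Q : ℝ → ℝ := fun r => -1/3 - 3*h/2 - (1 + 2*h)*(r - 1) - (2 + h)/2 * (r - 1)^2
  have hP' : deriv P = fun r => -r^2 - h * (r + 1) := by
    ext r; simp (disch := fun_prop) [P]; ring
  have hQ' : deriv Q = fun r => -(1 + 2*h) - (2 + h) * (r - 1) := by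
    ext r; simp (disch := fun_prop) [Q]; ring
  refine contDiff_ite_lt (n := 2) (a := 1) (f := P) (g := Q) isOpen_univ isOpen_univ
    (subset_univ _) (subset_univ _) (by fun_prop) (by fun_prop) (iteratedDeriv_le_two_eq ?_ ?_ ?_)
  · norm_num [P, Q]; ring
  · simp [hP', hQ']; ring
  · rw [hP', hQ']; simp (disch := fun_prop); ring

theorem Freg_contDiff_general (h l : ℝ) (hl : l ∈ Set.Ioo (0:ℝ) 1) :
    ContDiff ℝ 2 (Freg h l) :=
  (contDiff_F1reg h hl).add (contDiff_F2reg h)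

/-- The regularized potential `F_λ` is twice continuously differentiable on all of `ℝ`. -/
theorem Freg_contDiff (h l : ℝ) (hh : h ∈ Set.Ioo (0:ℝ) 1) (hl : l ∈ Set.Ioo (0:ℝ) 1) :
    ContDiff ℝ 2 (Freg h l) :=
  Freg_contDiff_general h l hl
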